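/- arXiv:2405.06867 — 5 statements merged into one kernel-verified Lean document; each statement's English description precedes it below -/
import Mathlib

section
/- Let n ≥ 3 be an integer, let A = (a_{ij}) be a real symmetric n×n matrix with trace H, and let k ≥ 3/2 be a real number. Then k·|A|² − a_{11}a_{nn} − Σ_{i=1}^{n} a_{1i}² − Σ_{i=2}^{n} a_{in}² + H·(a_{11} + a_{nn}) ≥ ((2k² + k − n + 2)/(2nk − 3n + 6))·H². -/
open Finset

/-- Key scalar inequality: the tight quadratic estimate. -/
lemma quad_key (nr k a b q T : ℝ) (hn : 3 ≤ nr) (hk : 3 / 2 ≤ k)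
    (hCS : T ^ 2 ≤ (nr - 2) * q) :
    (2 * k ^ 2 + k - nr + 2) * (a + b + T) ^ 2
      ≤ (k * (a ^ 2 + b ^ 2 + q) - a ^ 2 - b ^ 2 - a * b + (a + b + T) * (a + b))
        * (2 * nr * k - 3 * nr + 6) := by
  have hD : 0 < 2 * nr * k - 3 * nr + 6 := by nlinarith
  have hm : (1 : ℝ) ≤ nr - 2 := by linarith
  have h1 : 0 ≤ (nr - 2) * (2 * nr * k - 3 * nr + 6) * (2 * k - 1) * (a - b) ^ 2 :=
    mul_nonneg (mul_nonneg (mul_nonneg (by linarith) hD.le) (by linarith)) (sq_nonneg _)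
  have h2 : 0 ≤ 4 * k * (2 * nr * k - 3 * nr + 6) * ((nr - 2) * q - T ^ 2) :=
    mul_nonneg (mul_nonneg (by linarith) hD.le) (by linarith)
  have h3 : 0 ≤ ((2 * nr * k - 3 * nr + 6) * (a + b) + 2 * ((nr - 2) - 2 * k) * (a + b + T)) ^ 2 :=
    sq_nonneg _
  have key : 4 * (nr - 2) * ((2 * k ^ 2 + k - nr + 2) * (a + b + T) ^ 2)
      ≤ 4 * (nr - 2) * ((k * (a ^ 2 + b ^ 2 + q) - a ^ 2 - b ^ 2 - a * b
          + (a + b + T) * (a + b)) * (2 * nr * k - 3 * nr + 6)) := by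
    nlinarith [h1, h2, h3]
  exact le_of_mul_le_mul_left key (by linarith)

/-- For `n ≥ 3`, a real symmetric `n × n` matrix `A` with trace `H`,
and `k ≥ 3/2`, one has
`k·|A|² − a₁₁aₙₙ − Σᵢ a₁ᵢ² − Σ_{i≥2} aᵢₙ² + H(a₁₁+aₙₙ) ≥ ((2k²+k−n+2)/(2nk−3n+6))·H²`. -/
theorem matrix_ineq (n : ℕ) (hn : 3 ≤ n) (k : ℝ) (hk : 3 / 2 ≤ k)
    (A : Matrix (Fin n) (Fin n) ℝ) (hA : A.IsSymm) :
    k * (∑ i, ∑ j, (A i j) ^ 2)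
      - A ⟨0, by omega⟩ ⟨0, by omega⟩ * A ⟨n - 1, by omega⟩ ⟨n - 1, by omega⟩
      - (∑ i, (A ⟨0, by omega⟩ i) ^ 2)
      - (∑ i ∈ Finset.univ.erase ⟨0, by omega⟩, (A i ⟨n - 1, by omega⟩) ^ 2)
      + (∑ i, A i i) * (A ⟨0, by omega⟩ ⟨0, by omega⟩ + A ⟨n - 1, by omega⟩ ⟨n - 1, by omega⟩)
    ≥ ((2 * k ^ 2 + k - n + 2) / (2 * n * k - 3 * n + 6)) * (∑ i, A i i) ^ 2 := by
  have h0 : 0 < n := by omega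
  set e0 : Fin n := ⟨0, by omega⟩ with he0
  set en : Fin n := ⟨n - 1, by omega⟩ with hen
  have hne : en ≠ e0 := Fin.ne_of_val_ne (by show n - 1 ≠ 0; omega)
  set a := A e0 e0 with ha
  set b := A en en with hb
  set H := ∑ i, A i i with hHdef
  set F := ∑ i, ∑ j, (A i j) ^ 2 with hF
  set P1 := ∑ i, (A e0 i) ^ 2 with hP1
  set P2 := ∑ i ∈ Finset.univ.erase e0, (A i en) ^ 2 with hP2
  set E2 : Finset (Fin n) := (Finset.univ.erase e0).erase en with hE2
  set q := ∑ i ∈ E2, (A i i) ^ 2 with hq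
  set T := ∑ i ∈ E2, A i i with hT
  set S := ∑ i, (A i i) ^ 2 with hS
  have hen_mem : en ∈ Finset.univ.erase e0 := Finset.mem_erase.2 ⟨hne, Finset.mem_univ _⟩
  -- split sums
  have hSsplit : S = a ^ 2 + b ^ 2 + q := by
    rw [hS, ← Finset.sum_erase_add _ _ (Finset.mem_univ e0),
      ← Finset.sum_erase_add _ _ hen_mem, ← hE2, ← hq]
    ring
  have hHsplit : H = a + b + T := by
    rw [hHdef, ← Finset.sum_erase_add _ _ (Finset.mem_univ e0),
      ← Finset.sum_erase_add _ _ hen_mem, ← hE2, ← hT]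
    ring
  have hcard : (E2.card : ℝ) = (n : ℝ) - 2 := by
    rw [hE2, Finset.card_erase_of_mem hen_mem, Finset.card_erase_of_mem (Finset.mem_univ _),
      Finset.card_univ, Fintype.card_fin]
    have h11 : n - 1 - 1 = n - 2 := by omega
    rw [h11, Nat.cast_sub (by omega : 2 ≤ n)]
    norm_num
  have hCS : T ^ 2 ≤ ((n : ℝ) - 2) * q := by
    rw [← hcard]
    exact sq_sum_le_card_mul_sum_sq
  -- diagonal bound : S ≤ F
  have hL1 : S ≤ F := by
    apply Finset.sum_le_sum
    intro i _
    exact Finset.single_le_sum (fun j _ => sq_nonneg (A i j)) (Finset.mem_univ i)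
  -- P1 + P2 + q ≤ F
  have hL2 : P1 + P2 + q ≤ F := by
    have hFsplit : F = P1 + ∑ i ∈ Finset.univ.erase e0, ∑ j, (A i j) ^ 2 := by
      rw [hF, ← Finset.sum_erase_add _ _ (Finset.mem_univ e0), hP1]
      ring
    have hP2split : P2 = b ^ 2 + ∑ i ∈ E2, (A i en) ^ 2 := by
      rw [hP2, ← Finset.sum_erase_add _ _ hen_mem, ← hE2]
      ring
    have hsplitrow : ∑ i ∈ Finset.univ.erase e0, ∑ j, (A i j) ^ 2
        = ∑ i ∈ E2, ∑ j, (A i j) ^ 2 + ∑ j, (A en j) ^ 2 := by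
      rw [← Finset.sum_erase_add _ _ hen_mem]
    have hrowE2 : ∑ i ∈ E2, ((A i en) ^ 2 + (A i i) ^ 2) ≤ ∑ i ∈ E2, ∑ j, (A i j) ^ 2 := by
      apply Finset.sum_le_sum
      intro i hi
      have hien : i ≠ en := (Finset.mem_erase.1 hi).1
      have hpair : (A i en) ^ 2 + (A i i) ^ 2 = ∑ j ∈ ({en, i} : Finset (Fin n)), (A i j) ^ 2 := by
        rw [Finset.sum_pair (Ne.symm hien)]
      rw [hpair]
      exact Finset.sum_le_sum_of_subset_of_nonneg (Finset.subset_univ _)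
        (fun j _ _ => sq_nonneg _)
    have hb2 : b ^ 2 ≤ ∑ j, (A en j) ^ 2 :=
      Finset.single_le_sum (fun j _ => sq_nonneg (A en j)) (Finset.mem_univ en)
    rw [Finset.sum_add_distrib] at hrowE2
    rw [hFsplit, hP2split, hsplitrow]
    linarith
  -- step 1 : k*F - P1 - P2 ≥ k*S - a^2 - b^2
  have hk1 : (1 : ℝ) ≤ k := by linarith
  have step1 : k * S - a ^ 2 - b ^ 2 ≤ k * F - P1 - P2 := by
    have h1 : 0 ≤ (k - 1) * (F - S) := mul_nonneg (by linarith) (by linarith)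
    nlinarith [h1, hL2, hSsplit]
  -- denominator positivity
  have hn3 : (3 : ℝ) ≤ (n : ℝ) := by exact_mod_cast hn
  have hD : 0 < 2 * (n : ℝ) * k - 3 * (n : ℝ) + 6 := by nlinarith
  -- final quadratic inequality
  have final : ((2 * k ^ 2 + k - (n : ℝ) + 2) / (2 * (n : ℝ) * k - 3 * (n : ℝ) + 6)) * H ^ 2
      ≤ k * S - a ^ 2 - b ^ 2 - a * b + H * (a + b) := by
    rw [div_mul_eq_mul_div, div_le_iff₀ hD]
    rw [hSsplit, hHsplit]
    exact quad_key (n : ℝ) k a b q T hn3 hk hCS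
  linarith [step1, final]
end

section
/- Let A = (a_{ij}) be a real symmetric 3×3 matrix with trace H. Then |A|² + H·a_{11} − Σ_{i=1}^{3} a_{i1}² ≥ H²/2. -/
open Finset

/-- for a real symmetric `3 × 3` matrix `A` with trace `H`,
`|A|² + H·a₁₁ − Σᵢ aᵢ₁² ≥ H²/2`. -/
theorem matrix_ineq_dim3 (A : Matrix (Fin 3) (Fin 3) ℝ) (hA : A.IsSymm) :
    (∑ i, ∑ j, (A i j) ^ 2) + (∑ i, A i i) * A 0 0 - (∑ i, (A i 0) ^ 2)
      ≥ (∑ i, A i i) ^ 2 / 2 := by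
  have h10 : A 1 0 = A 0 1 := by rw [← hA.apply]
  have h20 : A 2 0 = A 0 2 := by rw [← hA.apply]
  have h21 : A 2 1 = A 1 2 := by rw [← hA.apply]
  simp only [Fin.sum_univ_three, h10, h20, h21]
  nlinarith [sq_nonneg (A 0 0 + A 1 1 + A 2 2), sq_nonneg (A 1 1 - A 2 2), sq_nonneg (A 1 2), sq_nonneg (A 0 1), sq_nonneg (A 0 2), sq_nonneg (A 1 1 + A 2 2)]
end

section
/- Fix an integer n ≥ 1, set N = n + 1, let R : {1,…,N}⁴ → ℝ satisfy the antisymmetries R(a,b,c,d) = −R(b,a,c,d) and R(a,b,c,d) = −R(a,b,d,c), and let k be a real number. With Ric(i) = Σ_{m=1}^{N} R(m,i,i,m), S = Σ_{i=1}^{N} Ric(i), and k-triRic(i;j,l) = k·Ric(i) + Σ_{m≠i} R(m,j,j,m) + Σ_{m≠i} R(m,l,l,m) − R(j,l,l,j), one has Σ_{i=1}^{N} Σ_{j≠i} Σ_{l≠i, l≠j} k-triRic(i;j,l) = ((k+2)n − 3)(n − 1)·S, where the inner sum is over ordered pairs (j,l) of indices distinct from i and from each other. -/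
open Finset

/-- The Ricci curvature of an algebraic curvature-type tensor in an orthonormal frame. -/
noncomputable def ricci {N : ℕ} (R : Fin N → Fin N → Fin N → Fin N → ℝ) (i : Fin N) : ℝ :=
  ∑ m, R m i i m

/-- The `k`-weighted triRicci curvature
`k-triRic(i;j,l) = k·Ric(i) + Σ_{m≠i} R(m,j,j,m) + Σ_{m≠i} R(m,l,l,m) − R(j,l,l,j)`. -/
noncomputable def kTriRic {N : ℕ} (R : Fin N → Fin N → Fin N → Fin N → ℝ) (k : ℝ)
    (i j l : Fin N) : ℝ :=
  k * ricci R i + (∑ m ∈ Finset.univ.erase i, R m j j m)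
    + (∑ m ∈ Finset.univ.erase i, R m l l m) - R j l l j

/-- the full trace of the `k`-weighted triRicci curvature equals
`((k+2)n − 3)(n−1)·S` where `S` is the scalar curvature. -/
theorem kTriRic_trace (n : ℕ) (hn : 1 ≤ n)
    (R : Fin (n + 1) → Fin (n + 1) → Fin (n + 1) → Fin (n + 1) → ℝ)
    (hR1 : ∀ a b c d, R a b c d = - R b a c d)
    (hR2 : ∀ a b c d, R a b c d = - R a b d c)
    (k : ℝ) :
    ∑ i, ∑ j ∈ Finset.univ.erase i, ∑ l ∈ (Finset.univ.erase i).erase j, kTriRic R k i j l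
      = ((k + 2) * n - 3) * ((n : ℝ) - 1) * (∑ i, ricci R i) := by
  have h0 : ∀ a b c : Fin (n + 1), R a a b c = 0 := by
    intro a b c; have := hR1 a a b c; linarith
  have hs : ∀ a b : Fin (n + 1), R a b b a = R b a a b := by
    intro a b; rw [hR1, hR2]; ring
  set S : ℝ := ∑ i, ricci R i with hS
  have hAric : ∀ a : Fin (n + 1), (∑ m, R a m m a) = ricci R a := by
    intro a
    rw [ricci]
    exact Finset.sum_congr rfl fun m _ => hs a m
  have hErase : ∀ (a : Fin (n + 1)) (f : Fin (n + 1) → ℝ),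
      ∑ m ∈ univ.erase a, f m = (∑ m, f m) - f a :=
    fun a f => Finset.sum_erase_eq_sub (mem_univ a)
  have hErase2 : ∀ (a b : Fin (n + 1)) (f : Fin (n + 1) → ℝ), b ≠ a →
      ∑ m ∈ (univ.erase a).erase b, f m = (∑ m, f m) - f a - f b := by
    intro a b f hba
    rw [Finset.sum_erase_eq_sub (Finset.mem_erase.mpr ⟨hba, mem_univ b⟩), hErase]
  have hK : ∀ i j l : Fin (n + 1), kTriRic R k i j l
      = k * ricci R i + (ricci R j - R i j j i) + (ricci R l - R i l l i) - R j l l j := by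
    intro i j l
    simp only [kTriRic, hErase]
    rfl
  have hcast : ((n : ℝ) + 1) = ((n + 1 : ℕ) : ℝ) := by push_cast; ring
  -- step 1 : inner sum over l
  have step1 : ∀ i : Fin (n + 1), ∀ j ∈ univ.erase i,
      ∑ l ∈ (univ.erase i).erase j, kTriRic R k i j l
      = ((n : ℝ) - 1) * k * ricci R i - 2 * ricci R i + S
        + ((n : ℝ) - 3) * ricci R j + (3 - (n : ℝ)) * R i j j i := by
    intro i j hj
    have hji : j ≠ i := (Finset.mem_erase.mp hj).1
    have hcard : (((univ.erase i).erase j).card : ℝ) = (n : ℝ) - 1 := by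
      rw [Finset.card_erase_of_mem hj, Finset.card_erase_of_mem (mem_univ i), card_univ,
        Fintype.card_fin]
      have : n + 1 - 1 = n := rfl
      rw [this, Nat.cast_sub hn]
      norm_num
    simp only [hK]
    rw [Finset.sum_sub_distrib, Finset.sum_add_distrib, Finset.sum_add_distrib,
      Finset.sum_const, Finset.sum_const, Finset.sum_sub_distrib,
      hErase2 i j (fun l => ricci R l) hji, hErase2 i j (fun l => R i l l i) hji,
      hErase2 i j (fun l => R j l l j) hji, hAric i, hAric j, nsmul_eq_mul, nsmul_eq_mul, hcard,
      h0 i i i, hs j i, h0 j j j]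
    have : ∑ l, ricci R l = S := rfl
    rw [this]
    ring
  -- step 2 : sum over j
  have step2 : ∀ i : Fin (n + 1),
      ∑ j ∈ univ.erase i, ∑ l ∈ (univ.erase i).erase j, kTriRic R k i j l
      = ((n : ℝ) * ((n : ℝ) - 1) * k - 4 * (n : ℝ) + 6) * ricci R i + (2 * (n : ℝ) - 3) * S := by
    intro i
    rw [Finset.sum_congr rfl (step1 i),
      hErase i (fun j => ((n : ℝ) - 1) * k * ricci R i - 2 * ricci R i + S
        + ((n : ℝ) - 3) * ricci R j + (3 - (n : ℝ)) * R i j j i)]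
    rw [Finset.sum_add_distrib, Finset.sum_add_distrib, ← Finset.mul_sum, ← Finset.mul_sum,
      Finset.sum_const, card_univ, Fintype.card_fin, hAric i, h0 i i i, nsmul_eq_mul]
    have : ∑ l, ricci R l = S := rfl
    rw [this, ← hcast]
    ring
  rw [Finset.sum_congr rfl (fun i _ => step2 i), Finset.sum_add_distrib, ← Finset.mul_sum,
    Finset.sum_const, card_univ, Fintype.card_fin, nsmul_eq_mul, ← hS, ← hcast]
  ring
end

section
/- Fix an integer n ≥ 2, set N = n + 1, let R : {1,…,N}⁴ → ℝ satisfy the antisymmetries R(a,b,c,d) = −R(b,a,c,d) and R(a,b,c,d) = −R(a,b,d,c), let k ≥ 0 and δ be real numbers, and suppose k-triRic(i;j,l) ≥ δ for all pairwise distinct indices i, j, l ∈ {1,…,N}. Then the scalar curvature satisfies S ≥ (n+1)·n·δ / ((k+2)n − 3). In particular, if δ > 0 then S > 0. -/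
open Finset

/-- a uniform lower bound `δ` on the `k`-weighted triRicci curvature gives
`S ≥ (n+1)·n·δ/((k+2)n − 3)`; in particular `δ > 0` implies positive scalar curvature. -/
theorem scalar_lower_bound (n : ℕ) (hn : 2 ≤ n)
    (R : Fin (n + 1) → Fin (n + 1) → Fin (n + 1) → Fin (n + 1) → ℝ)
    (hR1 : ∀ a b c d, R a b c d = - R b a c d)
    (hR2 : ∀ a b c d, R a b c d = - R a b d c)
    (k δ : ℝ) (hk : 0 ≤ k)
    (hlow : ∀ i j l : Fin (n + 1), i ≠ j → i ≠ l → j ≠ l → δ ≤ kTriRic R k i j l) :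
    ((n : ℝ) + 1) * n * δ / ((k + 2) * n - 3) ≤ (∑ i, ricci R i) ∧
    (0 < δ → 0 < ∑ i, ricci R i) := by
  set S : ℝ := ∑ i, ricci R i with hS
  have hzero : ∀ a c d, R a a c d = 0 := by
    intro a c d
    have := hR1 a a c d
    linarith
  have hsym : ∀ a b, R b a a b = R a b b a := by
    intro a b
    have h1 := hR1 b a a b
    have h2 := hR2 a b a b
    linarith
  have hQsum : ∀ a, ∑ b, R a b b a = ricci R a := by
    intro a
    unfold ricci
    exact Finset.sum_congr rfl fun b _ => (hsym a b).symm
  -- rewrite kTriRic in closed form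
  have hform : ∀ i j l : Fin (n + 1),
      kTriRic R k i j l
        = k * ricci R i + ricci R j + ricci R l - R i j j i - R i l l i - R j l l j := by
    intro i j l
    unfold kTriRic
    rw [Finset.sum_erase_eq_sub (mem_univ i), Finset.sum_erase_eq_sub (mem_univ i)]
    unfold ricci
    ring
  -- inner sum over l
  have hinner : ∀ i j : Fin (n + 1), j ≠ i →
      ∑ l ∈ (univ.erase i).erase j, kTriRic R k i j l
        = ((n : ℝ) - 1) * (k * ricci R i) - 2 * ricci R i + ((n : ℝ) - 3) * ricci R j
          + (3 - (n : ℝ)) * R i j j i + S := by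
    intro i j hji
    have hjmem : j ∈ univ.erase i := mem_erase.2 ⟨hji, mem_univ j⟩
    have hcard2 : ((univ.erase i).erase j).card = n - 1 := by
      rw [card_erase_of_mem hjmem, card_erase_of_mem (mem_univ i), card_univ,
        Fintype.card_fin]
      omega
    have e1 : ∑ l ∈ (univ.erase i).erase j, ricci R l = S - ricci R j - ricci R i := by
      rw [Finset.sum_erase_eq_sub hjmem, Finset.sum_erase_eq_sub (mem_univ i), hS]
      ring
    have e2 : ∑ l ∈ (univ.erase i).erase j, R i l l i = ricci R i - R i j j i := by
      rw [Finset.sum_erase_eq_sub hjmem, Finset.sum_erase_eq_sub (mem_univ i), hQsum,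
        hzero i i i]
      ring
    have e3 : ∑ l ∈ (univ.erase i).erase j, R j l l j = ricci R j - R i j j i := by
      rw [Finset.sum_erase_eq_sub hjmem, Finset.sum_erase_eq_sub (mem_univ i), hQsum,
        hzero j j j, hsym j i]
      ring
    calc ∑ l ∈ (univ.erase i).erase j, kTriRic R k i j l
        = ∑ l ∈ (univ.erase i).erase j,
            (k * ricci R i + ricci R j - R i j j i
              + (ricci R l - R i l l i - R j l l j)) := by
          refine Finset.sum_congr rfl fun l _ => ?_
          rw [hform i j l]; ring
      _ = (((univ.erase i).erase j).card : ℝ) * (k * ricci R i + ricci R j - R i j j i)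
            + ((∑ l ∈ (univ.erase i).erase j, ricci R l)
              - (∑ l ∈ (univ.erase i).erase j, R i l l i)
              - (∑ l ∈ (univ.erase i).erase j, R j l l j)) := by
          rw [Finset.sum_add_distrib, Finset.sum_const, nsmul_eq_mul]
          congr 1
          rw [Finset.sum_sub_distrib, Finset.sum_sub_distrib]
      _ = ((n : ℝ) - 1) * (k * ricci R i) - 2 * ricci R i + ((n : ℝ) - 3) * ricci R j
          + (3 - (n : ℝ)) * R i j j i + S := by
          rw [e1, e2, e3, hcard2, Nat.cast_sub (by omega : 1 ≤ n), Nat.cast_one]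
          ring
  -- middle sum over j
  have hmid : ∀ i : Fin (n + 1),
      ∑ j ∈ univ.erase i, ∑ l ∈ (univ.erase i).erase j, kTriRic R k i j l
        = (2 * (n : ℝ) - 3) * S
          + (k * (n : ℝ) * ((n : ℝ) - 1) - 4 * (n : ℝ) + 6) * ricci R i := by
    intro i
    have hcard1 : (univ.erase i).card = n := by
      rw [card_erase_of_mem (mem_univ i), card_univ, Fintype.card_fin]
      omega
    have f1 : ∑ j ∈ univ.erase i, ricci R j = S - ricci R i := by
      rw [Finset.sum_erase_eq_sub (mem_univ i), hS]
    have f2 : ∑ j ∈ univ.erase i, R i j j i = ricci R i := by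
      rw [Finset.sum_erase_eq_sub (mem_univ i), hQsum, hzero i i i, sub_zero]
    calc ∑ j ∈ univ.erase i, ∑ l ∈ (univ.erase i).erase j, kTriRic R k i j l
        = ∑ j ∈ univ.erase i,
            ((((n : ℝ) - 1) * (k * ricci R i) - 2 * ricci R i + S)
              + ((n : ℝ) - 3) * ricci R j + (3 - (n : ℝ)) * R i j j i) := by
          refine Finset.sum_congr rfl fun j hj => ?_
          rw [hinner i j (mem_erase.1 hj).1]; ring
      _ = ((univ.erase i).card : ℝ) * (((n : ℝ) - 1) * (k * ricci R i) - 2 * ricci R i + S)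
            + ((n : ℝ) - 3) * (∑ j ∈ univ.erase i, ricci R j)
            + (3 - (n : ℝ)) * (∑ j ∈ univ.erase i, R i j j i) := by
          rw [Finset.sum_add_distrib, Finset.sum_add_distrib, Finset.sum_const,
            nsmul_eq_mul, Finset.mul_sum, Finset.mul_sum]
      _ = (2 * (n : ℝ) - 3) * S
          + (k * (n : ℝ) * ((n : ℝ) - 1) - 4 * (n : ℝ) + 6) * ricci R i := by
          rw [f1, f2, hcard1]
          ring
  -- total sum
  have htotal : ∑ i, ∑ j ∈ univ.erase i, ∑ l ∈ (univ.erase i).erase j, kTriRic R k i j l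
      = ((n : ℝ) - 1) * ((k + 2) * (n : ℝ) - 3) * S := by
    calc ∑ i, ∑ j ∈ univ.erase i, ∑ l ∈ (univ.erase i).erase j, kTriRic R k i j l
        = ∑ i : Fin (n + 1), ((2 * (n : ℝ) - 3) * S
            + (k * (n : ℝ) * ((n : ℝ) - 1) - 4 * (n : ℝ) + 6) * ricci R i) := by
          exact Finset.sum_congr rfl fun i _ => hmid i
      _ = ((n : ℝ) + 1) * ((2 * (n : ℝ) - 3) * S)
            + (k * (n : ℝ) * ((n : ℝ) - 1) - 4 * (n : ℝ) + 6) * S := by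
          rw [Finset.sum_add_distrib, Finset.sum_const, nsmul_eq_mul, card_univ,
            Fintype.card_fin, ← Finset.mul_sum, ← hS]
          push_cast
          ring
      _ = ((n : ℝ) - 1) * ((k + 2) * (n : ℝ) - 3) * S := by ring
  -- lower bound on the total sum
  have hge : ((n : ℝ) + 1) * (n : ℝ) * ((n : ℝ) - 1) * δ
      ≤ ∑ i, ∑ j ∈ univ.erase i, ∑ l ∈ (univ.erase i).erase j, kTriRic R k i j l := by
    have step1 : ∀ (i j : Fin (n + 1)), j ≠ i →
        ((n : ℝ) - 1) * δ ≤ ∑ l ∈ (univ.erase i).erase j, kTriRic R k i j l := by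
      intro i j hji
      have hjmem : j ∈ univ.erase i := mem_erase.2 ⟨hji, mem_univ j⟩
      have hcard2 : ((univ.erase i).erase j).card = n - 1 := by
        rw [card_erase_of_mem hjmem, card_erase_of_mem (mem_univ i), card_univ,
          Fintype.card_fin]
        omega
      have := Finset.card_nsmul_le_sum ((univ.erase i).erase j)
        (fun l => kTriRic R k i j l) δ (fun l hl => by
          have h1 := (mem_erase.1 hl).1
          have h2 := (mem_erase.1 (mem_erase.1 hl).2).1
          exact hlow i j l (Ne.symm hji) (Ne.symm h2) (Ne.symm h1))
      rw [hcard2, nsmul_eq_mul, Nat.cast_sub (by omega : 1 ≤ n), Nat.cast_one] at this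
      exact this
    have step2 : ∀ i : Fin (n + 1),
        (n : ℝ) * (((n : ℝ) - 1) * δ)
          ≤ ∑ j ∈ univ.erase i, ∑ l ∈ (univ.erase i).erase j, kTriRic R k i j l := by
      intro i
      have hcard1 : (univ.erase i).card = n := by
        rw [card_erase_of_mem (mem_univ i), card_univ, Fintype.card_fin]
        omega
      have := Finset.card_nsmul_le_sum (univ.erase i)
        (fun j => ∑ l ∈ (univ.erase i).erase j, kTriRic R k i j l) (((n : ℝ) - 1) * δ)
        (fun j hj => step1 i j (mem_erase.1 hj).1)
      rw [hcard1, nsmul_eq_mul] at this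
      exact this
    have := Finset.card_nsmul_le_sum (univ : Finset (Fin (n + 1)))
      (fun i => ∑ j ∈ univ.erase i, ∑ l ∈ (univ.erase i).erase j, kTriRic R k i j l)
      ((n : ℝ) * (((n : ℝ) - 1) * δ)) (fun i _ => step2 i)
    rw [card_univ, Fintype.card_fin, nsmul_eq_mul] at this
    push_cast at this
    linarith
  have hn2 : (2 : ℝ) ≤ (n : ℝ) := by exact_mod_cast hn
  have hd : 0 < (k + 2) * (n : ℝ) - 3 := by nlinarith
  have hkey : ((n : ℝ) + 1) * (n : ℝ) * δ ≤ ((k + 2) * (n : ℝ) - 3) * S := by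
    rw [htotal] at hge
    have hpos : 0 < (n : ℝ) - 1 := by linarith
    nlinarith
  constructor
  · rw [div_le_iff₀ hd]
    linarith [hkey]
  · intro hδ
    have h1 : 0 < ((n : ℝ) + 1) * (n : ℝ) * δ := by positivity
    nlinarith
end

section
/- Let n ∈ {2, 3}, set N = n + 1, and let R : {1,…,N}⁴ → ℝ satisfy the antisymmetries R(a,b,c,d) = −R(b,a,c,d) and R(a,b,c,d) = −R(a,b,d,c). Then for all pairwise distinct indices i, j, l ∈ {1,…,N}, the 1-weighted triRicci curvature equals half the scalar curvature: 1-triRic(i;j,l) = S/2. -/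
open Finset

/-- in dimensions `n + 1` with `n ∈ {2, 3}`, the `1`-weighted triRicci
curvature equals half the scalar curvature. -/
theorem oneTriRic_eq_half_scalar (n : ℕ) (hn : n = 2 ∨ n = 3)
    (R : Fin (n + 1) → Fin (n + 1) → Fin (n + 1) → Fin (n + 1) → ℝ)
    (hR1 : ∀ a b c d, R a b c d = - R b a c d)
    (hR2 : ∀ a b c d, R a b c d = - R a b d c) :
    ∀ i j l : Fin (n + 1), i ≠ j → i ≠ l → j ≠ l →
      kTriRic R 1 i j l = (∑ i, ricci R i) / 2 := by
  have hzero : ∀ a c d, R a a c d = 0 := by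
    intro a c d
    have := hR1 a a c d
    linarith
  have hsym : ∀ a b, R a b b a = R b a a b := by
    intro a b
    rw [hR1 a b b a, hR2 b a b a, neg_neg]
  intro i j l hij hil hjl
  rcases hn with h | h <;> subst h
  · -- n = 2, so N = 3 and univ = {i, j, l}
    have huniv : (Finset.univ : Finset (Fin 3)) = {i, j, l} := by
      symm
      apply Finset.eq_univ_of_card
      rw [Finset.card_insert_of_notMem (by simp [hij, hil]),
        Finset.card_insert_of_notMem (by simp [hjl]), Finset.card_singleton]
      rfl
    have hsum : ∀ f : Fin 3 → ℝ, ∑ m, f m = f i + f j + f l := by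
      intro f
      rw [huniv, Finset.sum_insert (by simp [hij, hil]),
        Finset.sum_insert (by simp [hjl]), Finset.sum_singleton]
      ring
    simp only [kTriRic, ricci, Finset.sum_erase_eq_sub (Finset.mem_univ _), hsum, one_mul]
    have h1 := hzero i i i
    have h2 := hzero j j j
    have h3 := hzero l l l
    have s1 := hsym i j
    have s2 := hsym i l
    have s3 := hsym j l
    linarith
  · -- n = 3, so N = 4 and univ = {i, j, l, p} for some p
    have hcard : ({i, j, l} : Finset (Fin 4)).card = 3 := by
      rw [Finset.card_insert_of_notMem (by simp [hij, hil]),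
        Finset.card_insert_of_notMem (by simp [hjl]), Finset.card_singleton]
    have hne : ({i, j, l} : Finset (Fin 4))ᶜ.Nonempty := by
      rw [← Finset.card_pos, Finset.card_compl, hcard]
      simp
    obtain ⟨p, hp⟩ := hne
    rw [Finset.mem_compl] at hp
    simp only [Finset.mem_insert, Finset.mem_singleton, not_or] at hp
    obtain ⟨hpi, hpj, hpl⟩ := hp
    have huniv : (Finset.univ : Finset (Fin 4)) = {i, j, l, p} := by
      symm
      apply Finset.eq_univ_of_card
      rw [Finset.card_insert_of_notMem (by simp [hij, hil, Ne.symm hpi]),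
        Finset.card_insert_of_notMem (by simp [hjl, Ne.symm hpj]),
        Finset.card_insert_of_notMem (by simp [Ne.symm hpl]), Finset.card_singleton]
      rfl
    have hsum : ∀ f : Fin 4 → ℝ, ∑ m, f m = f i + f j + f l + f p := by
      intro f
      rw [huniv, Finset.sum_insert (by simp [hij, hil, Ne.symm hpi]),
        Finset.sum_insert (by simp [hjl, Ne.symm hpj]),
        Finset.sum_insert (by simp [Ne.symm hpl]), Finset.sum_singleton]
      ring
    simp only [kTriRic, ricci, Finset.sum_erase_eq_sub (Finset.mem_univ _), hsum, one_mul]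
    have h1 := hzero i i i
    have h2 := hzero j j j
    have h3 := hzero l l l
    have h4 := hzero p p p
    have s1 := hsym i j
    have s2 := hsym i l
    have s3 := hsym j l
    have s4 := hsym i p
    have s5 := hsym j p
    have s6 := hsym l p
    linarith
end
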